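/- arXiv:math/0405455 — 7 statements merged into one kernel-verified Lean document; each statement's English description precedes it below -/
import Mathlib

section
/- Let μ be a probability measure on a finite set and g a bounded measurable function with μ[g] = 0. Then μ[exp(g)] ≤ exp( (1/2) μ[g² exp(|g|)] ). -/
/-!
Averaging the pointwise bound `e^a ≤ 1 + a + (a²/2) e^{|a|}` against `μ` kills the linear term,
since `μ[g] = 0`, leaving `μ[e^g] ≤ 1 + (1/2) μ[g² e^{|g|}]`; then `1 + x ≤ e^x`.
-/

open Finset

namespace Real

theorem exp_le_one_add_add_sq_div_two_of_nonpos {a : ℝ} (ha : a ≤ 0) :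
    exp a ≤ 1 + a + a ^ 2 / 2 := by
  have hderiv : ∀ t : ℝ, HasDerivAt (fun t ↦ 1 + t + t ^ 2 / 2 - exp t) (1 + t - exp t) t :=
    fun t ↦ ((((hasDerivAt_id' t).const_add 1).fun_add
      ((hasDerivAt_pow 2 t).div_const 2)).fun_sub (hasDerivAt_exp t)).congr_deriv (by norm_num)
  have hanti : Antitone fun t ↦ 1 + t + t ^ 2 / 2 - exp t :=
    antitone_of_hasDerivAt_nonpos hderiv fun t ↦
      show 1 + t - exp t ≤ 0 by linarith [add_one_le_exp t]
  have h : 0 ≤ 1 + a + a ^ 2 / 2 - exp a := by simpa using hanti ha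
  linarith

/-- Equivalently, `(1 + t) e^{-t} + t² / 2` is nondecreasing: its derivative `t (1 - e^{-t})`
is nonnegative everywhere. -/
theorem exp_le_one_add_add_sq_div_two_mul_exp_of_nonneg {a : ℝ} (ha : 0 ≤ a) :
    exp a ≤ 1 + a + a ^ 2 / 2 * exp a := by
  have hderiv : ∀ t : ℝ, HasDerivAt (fun t ↦ (1 + t) * exp (-t) + t ^ 2 / 2)
      (t * (1 - exp (-t))) t :=
    fun t ↦ ((((hasDerivAt_id' t).const_add 1).fun_mul (hasDerivAt_neg t).exp).fun_add
      ((hasDerivAt_pow 2 t).div_const 2)).congr_deriv (by norm_num; ring)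
  have hmono : Monotone fun t ↦ (1 + t) * exp (-t) + t ^ 2 / 2 := by
    refine monotone_of_hasDerivAt_nonneg hderiv fun t ↦ ?_
    rcases le_total 0 t with ht | ht
    · exact mul_nonneg ht (sub_nonneg.2 (exp_le_one_iff.2 (neg_nonpos.2 ht)))
    · exact mul_nonneg_of_nonpos_of_nonpos ht (sub_nonpos.2 (one_le_exp (neg_nonneg.2 ht)))
  have h : 1 ≤ (1 + a) * exp (-a) + a ^ 2 / 2 := by simpa using hmono ha
  have hinv : exp a * exp (-a) = 1 := by rw [← exp_add, add_neg_cancel, exp_zero]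
  linear_combination mul_le_mul_of_nonneg_left h (exp_pos a).le + (1 + a) * hinv

theorem exp_le_one_add_add_sq_div_two_mul_exp_abs (a : ℝ) :
    exp a ≤ 1 + a + a ^ 2 / 2 * exp |a| := by
  rcases le_total 0 a with ha | ha
  · rw [abs_of_nonneg ha]
    exact exp_le_one_add_add_sq_div_two_mul_exp_of_nonneg ha
  · have : a ^ 2 / 2 ≤ a ^ 2 / 2 * exp |a| :=
      le_mul_of_one_le_right (by positivity) (one_le_exp (abs_nonneg a))
    linarith [exp_le_one_add_add_sq_div_two_of_nonpos ha]

end Real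

theorem sum_mul_exp_le_one_add_half_sum_mul_sq_mul_exp_abs {S : Type*} (s : Finset S)
    (μ : S → ℝ) (hμ : ∀ x ∈ s, 0 ≤ μ x) (hμ1 : ∑ x ∈ s, μ x = 1)
    (g : S → ℝ) (hg : ∑ x ∈ s, μ x * g x = 0) :
    ∑ x ∈ s, μ x * Real.exp (g x) ≤ 1 + (1 / 2) * ∑ x ∈ s, μ x * g x ^ 2 * Real.exp |g x| :=
  calc ∑ x ∈ s, μ x * Real.exp (g x)
      ≤ ∑ x ∈ s, μ x * (1 + g x + g x ^ 2 / 2 * Real.exp |g x|) :=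
        sum_le_sum fun x hx ↦
          mul_le_mul_of_nonneg_left (Real.exp_le_one_add_add_sq_div_two_mul_exp_abs _) (hμ x hx)
    _ = ∑ x ∈ s, μ x + ∑ x ∈ s, μ x * g x
          + (1 / 2) * ∑ x ∈ s, μ x * g x ^ 2 * Real.exp |g x| := by
        rw [mul_sum, ← sum_add_distrib, ← sum_add_distrib]
        exact sum_congr rfl fun x _ ↦ by ring
    _ = 1 + (1 / 2) * ∑ x ∈ s, μ x * g x ^ 2 * Real.exp |g x| := by rw [hμ1, hg, add_zero]

/-- if `μ` is a probability measure on a finite set and `μ[g] = 0`, then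
`μ[exp g] ≤ exp((1/2) μ[g² exp |g|])`. -/
theorem exp_moment_bound_of_mean_zero
    {S : Type*} [Fintype S]
    (μ : S → ℝ) (hμ : ∀ x, 0 ≤ μ x) (hμ1 : ∑ x, μ x = 1)
    (g : S → ℝ) (hg : ∑ x, μ x * g x = 0) :
    ∑ x, μ x * Real.exp (g x)
      ≤ Real.exp ((1 / 2) * ∑ x, μ x * (g x) ^ 2 * Real.exp |g x|) :=
  (sum_mul_exp_le_one_add_half_sum_mul_sq_mul_exp_abs univ μ (fun x _ ↦ hμ x) hμ1 g hg).trans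
    (by linarith [Real.add_one_le_exp ((1 / 2) * ∑ x, μ x * (g x) ^ 2 * Real.exp |g x|)])
end

section
/- The function α : ℝ₊ × ℝ₊ → ℝ defined by α(a,b) = (a - b)·(log a - log b) is jointly convex on (0,∞) × (0,∞). -/
/-!
Writing `log a - log b = log (a / b)`, one gets `α(a, b) = a log (a / b) + b log (b / a)`. The
summand `a log (a / b) = b φ(a / b)` is the perspective of the convex function `φ(t) = t log t`,
and the perspective `(x, t) ↦ t φ(x / t)` of a convex function is jointly convex: a convex
combination of `(x₁, t₁)` and `(x₂, t₂)` is sent to a convex combination of `x₁ / t₁` and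
`x₂ / t₂`, with weights proportional to `a t₁` and `b t₂`. The second summand is the first one
composed with the swap `(a, b) ↦ (b, a)`.
-/

open Real Set

section Perspective

variable {E : Type*} [AddCommGroup E] [Module ℝ E]

theorem inv_smul_add_eq_perspective_comb {a b t₁ t₂ : ℝ} (x₁ x₂ : E) (ht₁ : t₁ ≠ 0)
    (ht₂ : t₂ ≠ 0) (ht : a * t₁ + b * t₂ ≠ 0) :
    (a * t₁ + b * t₂)⁻¹ • (a • x₁ + b • x₂) =
      (a * t₁ / (a * t₁ + b * t₂)) • (t₁⁻¹ • x₁) + (b * t₂ / (a * t₁ + b * t₂)) • (t₂⁻¹ • x₂) := by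
  simp only [smul_smul, smul_add]
  congr 2 <;> field_simp

theorem perspective_weights {a b t₁ t₂ : ℝ} (ha : 0 ≤ a) (hb : 0 ≤ b) (ht₁ : 0 < t₁)
    (ht₂ : 0 < t₂) (hT : 0 < a * t₁ + b * t₂) :
    0 ≤ a * t₁ / (a * t₁ + b * t₂) ∧ 0 ≤ b * t₂ / (a * t₁ + b * t₂) ∧
      a * t₁ / (a * t₁ + b * t₂) + b * t₂ / (a * t₁ + b * t₂) = 1 :=
  ⟨by positivity, by positivity, by field_simp⟩

theorem ConvexOn.perspective {s : Set E} {φ : E → ℝ} (hφ : ConvexOn ℝ s φ) :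
    ConvexOn ℝ {p : E × ℝ | 0 < p.2 ∧ p.2⁻¹ • p.1 ∈ s} (fun p => p.2 * φ (p.2⁻¹ • p.1)) := by
  refine ⟨?_, ?_⟩ <;>
    rintro ⟨x₁, t₁⟩ ⟨ht₁, hx₁⟩ ⟨x₂, t₂⟩ ⟨ht₂, hx₂⟩ a b ha hb hab <;>
    have hT : 0 < a * t₁ + b * t₂ := convex_Ioi (0 : ℝ) ht₁ ht₂ ha hb hab <;>
    obtain ⟨hw₁, hw₂, hw⟩ := perspective_weights ha hb ht₁ ht₂ hT <;>
    simp only [Prod.smul_mk, Prod.mk_add_mk, smul_eq_mul] at *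
  · refine ⟨hT, ?_⟩
    rw [inv_smul_add_eq_perspective_comb x₁ x₂ ht₁.ne' ht₂.ne' hT.ne']
    exact hφ.1 hx₁ hx₂ hw₁ hw₂ hw
  · rw [inv_smul_add_eq_perspective_comb x₁ x₂ ht₁.ne' ht₂.ne' hT.ne']
    calc (a * t₁ + b * t₂) * φ _
        ≤ (a * t₁ + b * t₂) * ((a * t₁ / (a * t₁ + b * t₂)) • φ (t₁⁻¹ • x₁) +
            (b * t₂ / (a * t₁ + b * t₂)) • φ (t₂⁻¹ • x₂)) :=
          mul_le_mul_of_nonneg_left (hφ.2 hx₁ hx₂ hw₁ hw₂ hw) hT.le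
      _ = a * (t₁ * φ (t₁⁻¹ • x₁)) + b * (t₂ * φ (t₂⁻¹ • x₂)) := by
          simp only [smul_eq_mul]
          field_simp

end Perspective

theorem convexOn_mul_log_div :
    ConvexOn ℝ {p : ℝ × ℝ | 0 < p.1 ∧ 0 < p.2} (fun p => p.1 * log (p.1 / p.2)) := by
  refine (convexOn_mul_log.perspective.subset ?_ ?_).congr ?_
  · rintro p ⟨h₁, h₂⟩
    exact ⟨h₂, mem_Ici.2 (by positivity)⟩
  · exact (convex_Ioi 0).prod (convex_Ioi 0)
  · rintro p ⟨h₁, h₂⟩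
    simp only [smul_eq_mul]
    field_simp

/-- `α(a,b) = (a-b)(log a - log b)` is jointly convex on `(0,∞) × (0,∞)`. -/
theorem convexOn_sub_mul_log_sub :
    ConvexOn ℝ {p : ℝ × ℝ | 0 < p.1 ∧ 0 < p.2}
      (fun p : ℝ × ℝ => (p.1 - p.2) * (Real.log p.1 - Real.log p.2)) := by
  have hswap := convexOn_mul_log_div.comp_linearMap (LinearEquiv.prodComm ℝ ℝ ℝ).toLinearMap
  have hsymm : (LinearEquiv.prodComm ℝ ℝ ℝ).toLinearMap ⁻¹' {p : ℝ × ℝ | 0 < p.1 ∧ 0 < p.2} =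
      {p | 0 < p.1 ∧ 0 < p.2} := by
    ext p
    simp [and_comm]
  rw [hsymm] at hswap
  refine (convexOn_mul_log_div.add hswap).congr ?_
  rintro ⟨x, y⟩ ⟨hx, hy⟩
  simp only [Pi.add_apply, Function.comp_apply, LinearEquiv.coe_coe, LinearEquiv.prodComm_apply,
    Prod.swap_prod_mk]
  rw [log_div hx.ne' hy.ne', log_div hy.ne' hx.ne']
  ring
end

section
/- Define h : ℝ → ℝ by h(t) = t(e^t - 1). For every constant C < ∞, the quantity h(t) / (h(t-u) + u²) is uniformly bounded over all u ≤ C and t ≤ 2C (with the convention that the bound holds where the denominator is positive, and h ≥ 0 everywhere). -/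
set_option maxHeartbeats 1000000 in
/-- with `h t = t(e^t - 1)` (nonnegative everywhere), for every `C` the
ratio `h t / (h (t-u) + u²)` is uniformly bounded over `u ≤ C`, `t ≤ 2C`, i.e. there is
`M < ∞` with `h t ≤ M (h (t-u) + u²)` whenever the denominator is positive. -/
theorem h_ratio_bounded_small (C : ℝ) :
    ∃ M : ℝ, ∀ u t : ℝ, u ≤ C → t ≤ 2 * C →
      0 < (t - u) * (Real.exp (t - u) - 1) + u ^ 2 →
      t * (Real.exp t - 1) ≤ M * ((t - u) * (Real.exp (t - u) - 1) + u ^ 2) := by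
  set C' : ℝ := max C 1 with hC'def
  have hC1 : (1:ℝ) ≤ C' := le_max_right _ _
  have hCC : C ≤ C' := le_max_left _ _
  set E1 : ℝ := Real.exp (2*C') with hE1def
  set E2 : ℝ := Real.exp (1+C') with hE2def
  have hE1pos : 0 < E1 := Real.exp_pos _
  have hE2pos : 0 < E2 := Real.exp_pos _
  have hE1one : (1:ℝ) ≤ E1 := Real.one_le_exp (by linarith)
  have hE2one : (1:ℝ) ≤ E2 := Real.one_le_exp (by linarith)
  refine ⟨2 * E1 * E2 + 10, ?_⟩
  intro u t hu ht hd
  set s : ℝ := t - u with hsdef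
  have hts : t = s + u := by simp [hsdef]
  have hu' : u ≤ C' := hu.trans hCC
  have ht' : t ≤ 2 * C' := ht.trans (by linarith)
  set H : ℝ := s * (Real.exp s - 1) with hHdef
  -- H ≥ 0
  have hH : 0 ≤ H := by
    rcases le_or_gt 0 s with h | h
    · have := Real.add_one_le_exp s
      nlinarith
    · have h1 : Real.exp s < 1 := Real.exp_lt_one_iff.mpr h
      nlinarith
  have hU : (0:ℝ) ≤ u ^ 2 := sq_nonneg u
  rcases le_or_gt (-1) t with hA | hB
  · -- Case A : t ≥ -1
    have hsge : -(1+C') ≤ s := by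
      have : t - u ≥ -1 - C' := by linarith
      linarith [this]
    -- s² ≤ E2 * H
    have hhs : s ^ 2 ≤ E2 * H := by
      rcases le_or_gt 0 s with h | h
      · have h1 := Real.add_one_le_exp s
        have h2 : s ^ 2 ≤ H := by nlinarith
        nlinarith
      · have h1 := Real.add_one_le_exp (-s)
        have h3 : Real.exp (-s) * Real.exp s = 1 := by
          rw [← Real.exp_add]; simp
        have hse : Real.exp (-(1+C')) ≤ Real.exp s := Real.exp_le_exp.mpr hsge
        have h4 : H ≥ s ^ 2 * Real.exp s := by
          nlinarith [Real.exp_pos s]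
        have h5 : E2 * Real.exp (-(1+C')) = 1 := by
          rw [hE2def, ← Real.exp_add, show (1+C') + -(1+C') = 0 by ring, Real.exp_zero]
        nlinarith [sq_nonneg s, Real.exp_pos (-(1+C'))]
    -- h(t) ≤ E1 * t²
    have hht : t * (Real.exp t - 1) ≤ E1 * t ^ 2 := by
      rcases le_or_gt 0 t with h | h
      · have h1 := Real.add_one_le_exp (-t)
        have h3 : Real.exp (-t) * Real.exp t = 1 := by
          rw [← Real.exp_add]; simp
        have h4 : Real.exp t - 1 ≤ t * Real.exp t := by
          nlinarith [Real.exp_pos t]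
        have h2 : Real.exp t ≤ E1 := Real.exp_le_exp.mpr ht'
        have h5 : t * (Real.exp t - 1) ≤ t ^ 2 * Real.exp t := by nlinarith
        have h6 : t ^ 2 * Real.exp t ≤ t ^ 2 * E1 :=
          mul_le_mul_of_nonneg_left h2 (sq_nonneg t)
        nlinarith
      · have h1 := Real.add_one_le_exp t
        have h5 : t * (Real.exp t - 1) ≤ t ^ 2 := by nlinarith
        nlinarith [sq_nonneg t]
    have hsq : t ^ 2 ≤ 2 * s ^ 2 + 2 * u ^ 2 := by
      rw [hts]; nlinarith [sq_nonneg (s - u)]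
    have h6 : E1 * s ^ 2 ≤ E1 * (E2 * H) :=
      mul_le_mul_of_nonneg_left hhs hE1pos.le
    have h7 : E1 * u ^ 2 ≤ E1 * (E2 * u ^ 2) :=
      mul_le_mul_of_nonneg_left (by nlinarith) hE1pos.le
    nlinarith
  · -- Case B : t < -1
    have habs_u : |u| ≤ 4 * u ^ 2 + 1 / 16 := by
      nlinarith [sq_nonneg (2 * |u| - 1/4), sq_abs u, abs_nonneg u]
    have habs_s : |s| ≤ 1/2 + 3 * H := by
      rcases le_or_gt 0 s with h | h
      · rw [abs_of_nonneg h]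
        have h1 := Real.add_one_le_exp s
        nlinarith [sq_nonneg (s - 1/6)]
      · rw [abs_of_neg h]
        rcases le_or_gt (-s) (1/2) with h2 | h2
        · linarith
        · have h3 : s < -(1/2) := by linarith
          have h4 : Real.exp s ≤ Real.exp (-(1/2)) := Real.exp_le_exp.mpr h3.le
          have h5 : (3:ℝ)/2 ≤ Real.exp (1/2) := by
            have := Real.add_one_le_exp (1/2 : ℝ); linarith
          have h6 : Real.exp (-(1/2)) * Real.exp (1/2 : ℝ) = 1 := by
            rw [← Real.exp_add]; simp
          have h7 : Real.exp s ≤ 2/3 := by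
            nlinarith [Real.exp_pos (-(1/2 : ℝ))]
          nlinarith
    have hht : t * (Real.exp t - 1) ≤ -t := by
      have h1 : Real.exp t < 1 := Real.exp_lt_one_iff.mpr (by linarith)
      nlinarith [Real.exp_pos t]
    have hmt : -t ≤ |s| + |u| := by
      rw [hts]
      have := neg_abs_le s
      have := neg_abs_le u
      linarith
    have key : -t ≤ 10 * (H + u ^ 2) := by linarith
    nlinarith [mul_pos hE1pos hE2pos]
end

section
/- Let a, b, c > 0 and suppose there is a constant C₁ ≥ 1 with 1/C₁ ≤ b/c ≤ C₁. Then there exists a constant C depending only on C₁ such that (a - c)·log(a/c) ≤ C·(a - b)·log(a/b) + C·(b - c)²/max(a, c). -/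
private lemma log_diff_le (x y : ℝ) (hx : 0 < x) (hy : 0 < y) :
    Real.log x - Real.log y ≤ (x - y) / y := by
  have h := Real.log_le_sub_one_of_pos (div_pos hx hy)
  rw [Real.log_div hx.ne' hy.ne'] at h
  have he : x / y - 1 = (x - y) / y := by field_simp
  linarith [he ▸ h]

private lemma log_diff_ge (x y : ℝ) (hx : 0 < x) (hy : 0 < y) :
    (x - y) / x ≤ Real.log x - Real.log y := by
  have h := log_diff_le y x hy hx
  have he : (y - x) / x = -((x - y) / x) := by ring
  rw [he] at h
  linarith

private lemma f_nonneg (x y : ℝ) (hx : 0 < x) (hy : 0 < y) :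
    0 ≤ (x - y) * (Real.log x - Real.log y) := by
  rcases le_total y x with h | h
  · have := Real.log_le_log hy h
    have : 0 ≤ Real.log x - Real.log y := by linarith
    exact mul_nonneg (by linarith) this
  · have := Real.log_le_log hx h
    have h1 : Real.log x - Real.log y ≤ 0 := by linarith
    nlinarith [mul_nonneg (neg_nonneg.2 (sub_nonpos.2 h)) (neg_nonneg.2 h1)]

private lemma f_lower (x y : ℝ) (hx : 0 < x) (hy : 0 < y) :
    (x - y) ^ 2 ≤ max x y * ((x - y) * (Real.log x - Real.log y)) := by
  rcases le_total y x with h | h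
  · rw [max_eq_left h]
    have hg := log_diff_ge x y hx hy
    have h1 : x - y ≤ (Real.log x - Real.log y) * x := (div_le_iff₀ hx).mp hg
    nlinarith [mul_le_mul_of_nonneg_left h1 (sub_nonneg.2 h)]
  · rw [max_eq_right h]
    have hl := log_diff_le x y hx hy
    have h1 : (Real.log x - Real.log y) * y ≤ x - y := (le_div_iff₀ hy).mp hl
    nlinarith [mul_le_mul_of_nonpos_left h1 (sub_nonpos.2 h)]

private lemma f_upper (x y : ℝ) (hx : 0 < x) (hy : 0 < y) :
    min x y * ((x - y) * (Real.log x - Real.log y)) ≤ (x - y) ^ 2 := by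
  rcases le_total y x with h | h
  · rw [min_eq_right h]
    have hl := log_diff_le x y hx hy
    have h1 : (Real.log x - Real.log y) * y ≤ x - y := (le_div_iff₀ hy).mp hl
    nlinarith [mul_le_mul_of_nonneg_left h1 (sub_nonneg.2 h)]
  · rw [min_eq_left h]
    have hg := log_diff_ge x y hx hy
    have h1 : x - y ≤ (Real.log x - Real.log y) * x := (div_le_iff₀ hx).mp hg
    nlinarith [mul_le_mul_of_nonpos_left h1 (sub_nonpos.2 h)]

set_option maxHeartbeats 1000000 in
/-- if `b` and `c` are comparable up to a constant `C₁ ≥ 1`, then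
`(a-c)log(a/c) ≤ C (a-b)log(a/b) + C (b-c)²/max(a,c)` for a constant `C = C(C₁)`. -/
theorem alpha_comparison (C₁ : ℝ) (hC₁ : 1 ≤ C₁) :
    ∃ C : ℝ, ∀ a b c : ℝ, 0 < a → 0 < b → 0 < c →
      C₁⁻¹ ≤ b / c → b / c ≤ C₁ →
      (a - c) * Real.log (a / c)
        ≤ C * ((a - b) * Real.log (a / b)) + C * ((b - c) ^ 2 / max a c) := by
  refine ⟨4 * C₁ ^ 3, fun a b c ha hb hc hbc1 hbc2 => ?_⟩
  have hC₁0 : (0:ℝ) < C₁ := by linarith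
  have hbC : b ≤ C₁ * c := by
    have := (div_le_iff₀ hc).mp hbc2; linarith
  have hcC : c ≤ C₁ * b := by
    have h1 : C₁⁻¹ * c ≤ b := by
      have := (le_div_iff₀ hc).mp hbc1; linarith
    have := mul_le_mul_of_nonneg_left h1 hC₁0.le
    rw [← mul_assoc, mul_inv_cancel₀ hC₁0.ne', one_mul] at this
    linarith
  rw [Real.log_div ha.ne' hc.ne', Real.log_div ha.ne' hb.ne']
  set X := (a - c) * (Real.log a - Real.log c) with hX
  set Y := (a - b) * (Real.log a - Real.log b) with hY
  clear_value X Y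
  have hM : (0:ℝ) < max a c := lt_max_of_lt_left ha
  have hZ : (0:ℝ) ≤ (b - c) ^ 2 / max a c := by positivity
  have hY0 : 0 ≤ Y := by rw [hY]; exact f_nonneg a b ha hb
  have hC3 : (1:ℝ) ≤ C₁ ^ 3 := by nlinarith [mul_nonneg (sub_nonneg.2 hC₁) (sq_nonneg C₁), mul_nonneg (sub_nonneg.2 hC₁) (mul_nonneg (sub_nonneg.2 hC₁) hC₁0.le)]
  rcases le_or_gt a (2 * C₁ ^ 2 * c) with h2 | h2
  · rcases le_or_gt c (2 * C₁ ^ 2 * a) with h3 | h3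
    · -- comparable case
      have hX0 : 0 ≤ X := by rw [hX]; exact f_nonneg a c ha hc
      have hmM : max a c ≤ 2 * C₁ ^ 2 * min a c := by
        rcases le_total a c with h | h
        · rw [max_eq_right h, min_eq_left h]; exact h3
        · rw [max_eq_left h, min_eq_right h]; exact h2
      have hMb : max a b ≤ C₁ * max a c := by
        apply max_le
        · calc a ≤ max a c := le_max_left a c
            _ ≤ C₁ * max a c := by nlinarith
        · calc b ≤ C₁ * c := hbC
            _ ≤ C₁ * max a c := by
              have := le_max_right a c
              nlinarith
      have F1 := f_upper a c ha hc
      have F2 := f_lower a b ha hb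
      rw [← hX] at F1
      rw [← hY] at F2
      rw [← sub_le_iff_le_add', ← mul_div_assoc, le_div_iff₀ hM]
      have hm : (0:ℝ) ≤ min a c := le_min ha.le hc.le
      have t1 : max a c * X ≤ 2 * C₁ ^ 2 * (min a c * X) := by
        linarith [mul_le_mul_of_nonneg_right hmM hX0]
      have t2 : 2 * C₁ ^ 2 * (min a c * X) ≤ 2 * C₁ ^ 2 * (a - c) ^ 2 := by
        linarith [mul_le_mul_of_nonneg_left F1 (show (0:ℝ) ≤ 2 * C₁ ^ 2 by positivity)]
      have t3 : 2 * C₁ ^ 2 * (a - c) ^ 2 ≤ 4 * C₁ ^ 2 * (a - b) ^ 2 + 4 * C₁ ^ 2 * (b - c) ^ 2 := by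
        linarith [mul_nonneg (show (0:ℝ) ≤ 2 * C₁ ^ 2 by positivity) (sq_nonneg (a - 2 * b + c))]
      have t4 : 4 * C₁ ^ 2 * (a - b) ^ 2 ≤ 4 * C₁ ^ 2 * (max a b * Y) := by
        linarith [mul_le_mul_of_nonneg_left F2 (show (0:ℝ) ≤ 4 * C₁ ^ 2 by positivity)]
      have t5 : 4 * C₁ ^ 2 * (max a b * Y) ≤ 4 * C₁ ^ 3 * (max a c * Y) := by
        linarith [mul_le_mul_of_nonneg_left (mul_le_mul_of_nonneg_right hMb hY0)
          (show (0:ℝ) ≤ 4 * C₁ ^ 2 by positivity)]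
      have t6 : 4 * C₁ ^ 2 * (b - c) ^ 2 ≤ 4 * C₁ ^ 3 * (b - c) ^ 2 := by
        linarith [mul_nonneg (mul_nonneg (sq_nonneg C₁) (sub_nonneg.2 hC₁)) (sq_nonneg (b - c))]
      linarith [t1, t2, t3, t4, t5, t6]
    · -- a much smaller than c (and b)
      have hba : 2 * C₁ * a < b := by nlinarith
      have h2a : 2 * a < b := by nlinarith
      have hlogc : Real.log c ≤ Real.log C₁ + Real.log b := by
        calc Real.log c ≤ Real.log (C₁ * b) := Real.log_le_log hc hcC
          _ = Real.log C₁ + Real.log b := Real.log_mul hC₁0.ne' hb.ne'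
      have hlogC : Real.log C₁ ≤ Real.log b - Real.log a := by
        have h1 : C₁ * a ≤ b := by nlinarith
        have := Real.log_le_log (by positivity) h1
        rw [Real.log_mul hC₁0.ne' ha.ne'] at this
        linarith
      have hd1 : Real.log c - Real.log a ≤ 2 * (Real.log b - Real.log a) := by linarith
      have hd0 : 0 ≤ Real.log c - Real.log a := by
        have := Real.log_le_log ha (by nlinarith : a ≤ c)
        linarith
      have hca : c - a ≤ 2 * C₁ * (b - a) := by nlinarith
      have key : (c - a) * (Real.log c - Real.log a)
          ≤ (2 * C₁ * (b - a)) * (2 * (Real.log b - Real.log a)) := by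
        apply mul_le_mul hca hd1 hd0
        nlinarith
      have hXeq : X = (c - a) * (Real.log c - Real.log a) := by rw [hX]; ring
      have hYeq : (2 * C₁ * (b - a)) * (2 * (Real.log b - Real.log a)) = 4 * C₁ * Y := by
        rw [hY]; ring
      have hX4 : X ≤ 4 * C₁ * Y := by rw [hXeq]; rw [hYeq] at key; exact key
      have h1 : 4 * C₁ * Y ≤ 4 * C₁ ^ 3 * Y := by
        have hCsq : 1 ≤ C₁ ^ 2 := by nlinarith
        linarith [mul_nonneg (mul_nonneg hC₁0.le (sub_nonneg.2 hCsq)) hY0]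
      have h2 : (0:ℝ) ≤ 4 * C₁ ^ 3 * ((b - c) ^ 2 / max a c) := by positivity
      linarith
  · -- a much bigger than c (and b)
    have hba : 2 * C₁ * b < a := by nlinarith
    have h2b : 2 * b < a := by nlinarith
    have hlogc : Real.log c ≥ Real.log b - Real.log C₁ := by
      have := Real.log_le_log hb hbC
      rw [Real.log_mul hC₁0.ne' hc.ne'] at this
      linarith
    have hlogC : Real.log C₁ ≤ Real.log a - Real.log b := by
      have h1 : C₁ * b ≤ a := by nlinarith
      have := Real.log_le_log (by positivity) h1
      rw [Real.log_mul hC₁0.ne' hb.ne'] at this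
      linarith
    have hd1 : Real.log a - Real.log c ≤ 2 * (Real.log a - Real.log b) := by linarith
    have hd0 : 0 ≤ Real.log a - Real.log c := by
      have := Real.log_le_log hc (by nlinarith : c ≤ a)
      linarith
    have hac : a - c ≤ 2 * (a - b) := by nlinarith
    have key : (a - c) * (Real.log a - Real.log c)
        ≤ (2 * (a - b)) * (2 * (Real.log a - Real.log b)) := by
      apply mul_le_mul hac hd1 hd0
      nlinarith
    have hX4 : X ≤ 4 * Y := by rw [hX]; linarith [key]
    have h1 : 4 * Y ≤ 4 * C₁ ^ 3 * Y := by
      linarith [mul_nonneg (sub_nonneg.2 hC3) hY0]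
    have h2 : (0:ℝ) ≤ 4 * C₁ ^ 3 * ((b - c) ^ 2 / max a c) := by positivity
    linarith
end

section
/- Let c : ℕ → ℝ₊ with c(0) = 0 and c(k) > 0 for k ≥ 1, and suppose there exist δ > 0 and n₀ ∈ ℕ such that c(m) - c(n) ≥ δ whenever m ≥ n + n₀, and sup_n |c(n+1) - c(n)| ≤ C < ∞. Define c̃(k) = c(k) + (1/n₀) Σ_{j=1}^{n₀-1} ((n₀-j)/n₀)·(c(k+j) + c(k-j) - 2c(k)) for k ≥ n₀, and c̃(k) = c̃(n₀)·k/n₀ for k < n₀. Then there exists δ' > 0 such that c̃(k+1) - c̃(k) ≥ δ' for all k ∈ ℕ. -/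
/-!
For `k ≥ n₀` the averaged rate is a double moving average,
`n₀² c̃(k) = ∑_{i,l < n₀} c(k + i - l)`, because the tent weights `n₀ - |j|` count the pairs
`(i, l)` with `i - l = j`. Summing over `i` first, each column of `c̃(k+1) - c̃(k)` telescopes to a
jump `c(m + n₀) - c(m) ≥ δ`, so `c̃(k+1) - c̃(k) ≥ δ / n₀`. Below `n₀`, `c̃` is linear with slope
`c̃(n₀) / n₀`, which is positive because `c̃(n₀)` averages positive values of `c`.
-/

open Finset

theorem sum_Icc_one_eq_sum_range {M : Type*} [AddCommMonoid M] (f : ℕ → M) (n : ℕ) :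
    ∑ j ∈ Icc 1 n, f j = ∑ i ∈ range n, f (i + 1) := by
  rw [← Ico_add_one_right_eq_Icc, sum_Ico_eq_sum_range]
  simp [add_comm]

theorem sum_range_sum_range_sub {M : Type*} [AddCommMonoid M] (h : ℤ → M) (N : ℕ) :
    ∑ i ∈ range (N + 1), ∑ l ∈ range (N + 1), h (i - l)
      = (N + 1) • h 0 + ∑ j ∈ Icc 1 N, (N + 1 - j) • (h j + h (-j)) := by
  induction N with
  | zero => simp
  | succ N ih =>
    have hweights : ∑ j ∈ Icc 1 (N + 1), (N + 1 + 1 - j) • (h j + h (-j))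
        = ∑ j ∈ Icc 1 N, (N + 1 - j) • (h j + h (-j)) + ∑ j ∈ Icc 1 (N + 1), (h j + h (-j)) := by
      calc _ = ∑ j ∈ Icc 1 (N + 1), ((N + 1 - j) • (h j + h (-j)) + (h j + h (-j))) :=
            sum_congr rfl fun j hj => by
              rw [show N + 1 + 1 - j = N + 1 - j + 1 by grind, succ_nsmul]
        _ = _ := by rw [sum_add_distrib, sum_Icc_succ_top (by omega)]; simp
    have hrow (i : ℕ) : ∑ l ∈ range (N + 1 + 1), h ((i + 1 : ℕ) - l)
        = ∑ l ∈ range (N + 1), h (i - l) + h (i + 1 : ℕ) := by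
      rw [sum_range_succ']
      push_cast
      simp only [add_sub_add_right_eq_sub, sub_zero]
    have hcol : ∑ l ∈ range (N + 1 + 1), h ((0 : ℕ) - l)
        = ∑ l ∈ range (N + 1), h (-(l + 1 : ℕ)) + h 0 := by
      rw [sum_range_succ']
      simp
    rw [sum_range_succ', sum_congr rfl fun i _ => hrow i, hcol, sum_add_distrib, ih, hweights,
      sum_add_distrib, sum_Icc_one_eq_sum_range (fun j => h j),
      sum_Icc_one_eq_sum_range (fun j => h (-j))]
    simp only [add_smul, one_smul]
    abel

/-- The paper's `c̃(k)` for `k ≥ n₀`. -/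
noncomputable def averagedRate (c : ℕ → ℝ) (n₀ k : ℕ) : ℝ :=
  c k + (1 / (n₀ : ℝ)) * ∑ j ∈ Icc 1 (n₀ - 1),
    (((n₀ : ℝ) - j) / n₀) * (c (k + j) + c (k - j) - 2 * c k)

theorem averagedRate_eq_double_sum (c : ℕ → ℝ) {n₀ k : ℕ} (hn₀ : 1 ≤ n₀) (hk : n₀ ≤ k + 1) :
    averagedRate c n₀ k = (∑ i ∈ range n₀, ∑ l ∈ range n₀, c (k + i - l)) / n₀ ^ 2 := by
  obtain ⟨N, rfl⟩ : ∃ N, n₀ = N + 1 := ⟨n₀ - 1, by omega⟩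
  have htent := sum_range_sum_range_sub (fun j => c (k + j).toNat - c k) N
  have hdiag : ∀ i ∈ range (N + 1), ∀ l ∈ range (N + 1),
      c ((k : ℤ) + ((i : ℤ) - l)).toNat - c k = c (k + i - l) - c k := by
    intro i _ l hl
    rw [mem_range] at hl
    congr 2
    omega
  have hweight : ∀ j ∈ Icc 1 N,
      (N + 1 - j) • (c ((k : ℤ) + j).toNat - c k + (c ((k : ℤ) + -j).toNat - c k))
        = ((N + 1 : ℝ) - j) * (c (k + j) + c (k - j) - 2 * c k) := by
    intro j hj
    rw [mem_Icc] at hj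
    rw [nsmul_eq_mul, Nat.cast_sub (by omega), show ((k : ℤ) + j).toNat = k + j by omega,
      show ((k : ℤ) + -j).toNat = k - j by omega]
    push_cast
    ring
  beta_reduce at htent
  rw [sum_congr rfl fun i hi => sum_congr rfl (hdiag i hi), sum_congr rfl hweight] at htent
  simp only [add_zero, Int.toNat_natCast, sub_self, smul_zero, zero_add, sum_sub_distrib,
    sum_const, card_range, nsmul_eq_mul] at htent
  unfold averagedRate
  push_cast at htent ⊢
  simp only [div_mul_eq_mul_div, ← sum_div]
  rw [← htent]
  field_simp
  ring

theorem mul_le_double_sum_succ_sub_double_sum (c : ℕ → ℝ) {δ : ℝ} {n k : ℕ}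
    (hgap : ∀ a b : ℕ, a + n ≤ b → δ ≤ c b - c a) (hk : n ≤ k + 1) :
    n * δ ≤ ∑ i ∈ range n, ∑ l ∈ range n, c (k + 1 + i - l)
      - ∑ i ∈ range n, ∑ l ∈ range n, c (k + i - l) := by
  have hcolumn : ∀ l ∈ range n, ∑ i ∈ range n, (c (k + 1 + i - l) - c (k + i - l))
      = c (k - l + n) - c (k - l) := by
    intro l hl
    rw [mem_range] at hl
    have htelescope := sum_range_sub (fun i => c (k - l + i)) n
    rw [add_zero] at htelescope
    rw [← htelescope]
    exact sum_congr rfl fun i _ => by congr 2 <;> omega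
  rw [← sum_sub_distrib]
  simp only [← sum_sub_distrib]
  rw [sum_comm, sum_congr rfl hcolumn]
  calc (n : ℝ) * δ = ∑ _l ∈ range n, δ := by simp
    _ ≤ _ := sum_le_sum fun l _ => hgap _ _ le_rfl

theorem averaged_rate_uniformly_increasing_general
    (c : ℕ → ℝ) (hcpos : ∀ k, 1 ≤ k → 0 < c k)
    (δ : ℝ) (hδ : 0 < δ) (n₀ : ℕ) (hn₀ : 1 ≤ n₀)
    (H1 : ∀ n m : ℕ, n + n₀ ≤ m → δ ≤ c m - c n)
    (ct : ℕ → ℝ)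
    (hct : ∀ k, n₀ ≤ k → ct k = c k + (1 / (n₀ : ℝ)) *
      ∑ j ∈ Finset.Icc 1 (n₀ - 1),
        (((n₀ : ℝ) - j) / n₀) * (c (k + j) + c (k - j) - 2 * c k))
    (hct' : ∀ k, k < n₀ → ct k = ct n₀ * k / n₀) :
    ∃ δ' : ℝ, 0 < δ' ∧ ∀ k : ℕ, δ' ≤ ct (k + 1) - ct k := by
  have hn₀R : (0 : ℝ) < n₀ := by exact_mod_cast hn₀
  have hdouble (k : ℕ) (hk : n₀ ≤ k) :
      ct k = (∑ i ∈ range n₀, ∑ l ∈ range n₀, c (k + i - l)) / n₀ ^ 2 :=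
    (hct k hk).trans (averagedRate_eq_double_sum c hn₀ (by omega))
  have hlarge (k : ℕ) (hk : n₀ ≤ k) : δ / n₀ ≤ ct (k + 1) - ct k := by
    rw [hdouble k hk, hdouble (k + 1) (by omega), ← sub_div, le_div_iff₀ (by positivity)]
    calc δ / n₀ * n₀ ^ 2 = n₀ * δ := by field_simp
      _ ≤ _ := mul_le_double_sum_succ_sub_double_sum c H1 (by omega)
  have hpos : 0 < ct n₀ := by
    have hne : (range n₀).Nonempty := nonempty_range_iff.mpr (by omega)
    rw [hdouble n₀ le_rfl]
    exact div_pos (sum_pos (fun i _ => sum_pos (fun l hl => hcpos _ (by grind)) hne) hne)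
      (by positivity)
  have hlinear (k : ℕ) (hk : k ≤ n₀) : ct k = ct n₀ * k / n₀ := by
    rcases hk.lt_or_eq with hk | rfl
    · exact hct' k hk
    · field_simp
  refine ⟨min (δ / n₀) (ct n₀ / n₀), by positivity, fun k => ?_⟩
  rcases lt_or_ge k n₀ with hk | hk
  · rw [hlinear k hk.le, hlinear (k + 1) hk]
    push_cast
    calc min (δ / n₀) (ct n₀ / n₀) ≤ ct n₀ / n₀ := min_le_right _ _
      _ = _ := by ring
  · exact (min_le_left _ _).trans (hlarge k hk)

/-- under (H.1) and (H.2), the averaged rate `c̃` is uniformly strictly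
increasing. -/
theorem averaged_rate_uniformly_increasing
    (c : ℕ → ℝ) (hc0 : c 0 = 0) (hcpos : ∀ k, 1 ≤ k → 0 < c k)
    (δ : ℝ) (hδ : 0 < δ) (n₀ : ℕ) (hn₀ : 1 ≤ n₀)
    (H1 : ∀ n m : ℕ, n + n₀ ≤ m → δ ≤ c m - c n)
    (C : ℝ) (H2 : ∀ n : ℕ, |c (n + 1) - c n| ≤ C)
    (ct : ℕ → ℝ)
    (hct : ∀ k, n₀ ≤ k → ct k = c k + (1 / (n₀ : ℝ)) *
      ∑ j ∈ Finset.Icc 1 (n₀ - 1),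
        (((n₀ : ℝ) - j) / n₀) * (c (k + j) + c (k - j) - 2 * c k))
    (hct' : ∀ k, k < n₀ → ct k = ct n₀ * k / n₀) :
    ∃ δ' : ℝ, 0 < δ' ∧ ∀ k : ℕ, δ' ≤ ct (k + 1) - ct k :=
  averaged_rate_uniformly_increasing_general c hcpos δ hδ n₀ hn₀ H1 ct hct hct'
end

section
/- With ν the canonical zero-range measure on ℕ^L with N particles and homogeneous rate c, fix a vertex x and let ν_x(n) = ν(η_x = n). Then for every y ≠ x and every 1 ≤ n ≤ N: ν[c(η_y) | η_x = n-1] = c(n)·ν_x(n)/ν_x(n-1). -/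
open Finset

section Aux

variable {L : ℕ}

/-- Split a product over `Fin L` off at two distinct points. -/
@[to_additive]
lemma prod_split_two {M : Type*} [CommMonoid M] (x y : Fin L) (hxy : x ≠ y)
    (F : Fin L → M) :
    ∏ z, F z = F x * (F y * ∏ z ∈ (Finset.univ.erase x).erase y, F z) := by
  rw [Finset.mul_prod_erase _ _ (Finset.mem_erase.2 ⟨hxy.symm, Finset.mem_univ y⟩),
    Finset.mul_prod_erase _ _ (Finset.mem_univ x)]

end Aux

/-- for the canonical zero-range measure `ν` on `ℕ^L` with `N`
particles and homogeneous rate `c`, for every vertex `y ≠ x` and every `1 ≤ n ≤ N`: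
`ν[c(η_y) | η_x = n-1] = c(n)·ν_x(n)/ν_x(n-1)`. Conditional expectations and the
marginal `ν_x` are expressed via the unnormalized weights
`W(η) = ∏_z ∏_{k=1}^{η_z} c(k)⁻¹` (the normalization cancels). -/
theorem zero_range_conditional_rate_identity
    (L N : ℕ) (hL : 2 ≤ L) (hN : 1 ≤ N)
    (c : ℕ → ℝ) (hc0 : c 0 = 0) (hcpos : ∀ k, 1 ≤ k → 0 < c k)
    (x y : Fin L) (hxy : x ≠ y) (n : ℕ) (hn1 : 1 ≤ n) (hnN : n ≤ N) :
    (∑' η : Fin L → ℕ, if (∑ z, η z) = N ∧ η x = n - 1 then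
        (∏ z, ∏ k ∈ Finset.Icc 1 (η z), (c k)⁻¹) * c (η y) else 0)
      / (∑' η : Fin L → ℕ, if (∑ z, η z) = N ∧ η x = n - 1 then
          (∏ z, ∏ k ∈ Finset.Icc 1 (η z), (c k)⁻¹) else 0)
    = c n *
      (∑' η : Fin L → ℕ, if (∑ z, η z) = N ∧ η x = n then
          (∏ z, ∏ k ∈ Finset.Icc 1 (η z), (c k)⁻¹) else 0)
      / (∑' η : Fin L → ℕ, if (∑ z, η z) = N ∧ η x = n - 1 then
          (∏ z, ∏ k ∈ Finset.Icc 1 (η z), (c k)⁻¹) else 0) := by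
  set W : (Fin L → ℕ) → ℝ := fun η => ∏ z, ∏ k ∈ Finset.Icc 1 (η z), (c k)⁻¹ with hWdef
  have hWpos : ∀ η : Fin L → ℕ, 0 < W η := by
    intro η
    apply Finset.prod_pos
    intro z _
    apply Finset.prod_pos
    intro k hk
    exact inv_pos.2 (hcpos k (Finset.mem_Icc.1 hk).1)
  have hcn : 0 < c n := hcpos n hn1
  -- The key cancellation: W of the updated configuration times the extra rate.
  have hWkey : ∀ η : Fin L → ℕ, η x = n →
      W (Function.update (Function.update η y (η y + 1)) x (n - 1)) * c (η y + 1)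
        = c n * W η := by
    intro η hηx
    set ξ := Function.update (Function.update η y (η y + 1)) x (n - 1) with hξ
    have hξx : ξ x = n - 1 := by simp [hξ]
    have hξy : ξ y = η y + 1 := by
      simp [hξ, Function.update_of_ne (Ne.symm hxy)]
    have hξz : ∀ z, z ≠ x → z ≠ y → ξ z = η z := by
      intro z hzx hzy
      simp [hξ, Function.update_of_ne hzx, Function.update_of_ne hzy]
    have hrest : ∏ z ∈ (Finset.univ.erase x).erase y, ∏ k ∈ Finset.Icc 1 (ξ z), (c k)⁻¹
        = ∏ z ∈ (Finset.univ.erase x).erase y, ∏ k ∈ Finset.Icc 1 (η z), (c k)⁻¹ := by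
      apply Finset.prod_congr rfl
      intro z hz
      rw [Finset.mem_erase, Finset.mem_erase] at hz
      rw [hξz z hz.2.1 hz.1]
    have hWξ : W ξ = (∏ k ∈ Finset.Icc 1 (ξ x), (c k)⁻¹) *
        ((∏ k ∈ Finset.Icc 1 (ξ y), (c k)⁻¹) *
          ∏ z ∈ (Finset.univ.erase x).erase y, ∏ k ∈ Finset.Icc 1 (ξ z), (c k)⁻¹) :=
      prod_split_two x y hxy _
    have hWη : W η = (∏ k ∈ Finset.Icc 1 (η x), (c k)⁻¹) *
        ((∏ k ∈ Finset.Icc 1 (η y), (c k)⁻¹) *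
          ∏ z ∈ (Finset.univ.erase x).erase y, ∏ k ∈ Finset.Icc 1 (η z), (c k)⁻¹) :=
      prod_split_two x y hxy _
    have hx_prod : ∏ k ∈ Finset.Icc 1 (η x), (c k)⁻¹
        = (∏ k ∈ Finset.Icc 1 (ξ x), (c k)⁻¹) * (c n)⁻¹ := by
      obtain ⟨m, rfl⟩ : ∃ m, n = m + 1 := ⟨n - 1, by omega⟩
      rw [hηx, hξx, Nat.add_sub_cancel, Finset.prod_Icc_succ_top (by omega)]
    have hy_prod : ∏ k ∈ Finset.Icc 1 (ξ y), (c k)⁻¹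
        = (∏ k ∈ Finset.Icc 1 (η y), (c k)⁻¹) * (c (η y + 1))⁻¹ := by
      rw [hξy, Finset.prod_Icc_succ_top (by omega)]
    have hcn' : c n ≠ 0 := ne_of_gt hcn
    have hcy' : c (η y + 1) ≠ 0 := ne_of_gt (hcpos _ (by omega))
    rw [hWξ, hWη, hrest, hx_prod, hy_prod]
    generalize (∏ k ∈ Finset.Icc 1 (ξ x), (c k)⁻¹) = A
    generalize (∏ k ∈ Finset.Icc 1 (η y), (c k)⁻¹) = B
    generalize (∏ z ∈ (Finset.univ.erase x).erase y, ∏ k ∈ Finset.Icc 1 (η z), (c k)⁻¹) = R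
    have h1 : (c (η y + 1))⁻¹ * c (η y + 1) = 1 := inv_mul_cancel₀ hcy'
    have h2 : c n * (c n)⁻¹ = 1 := mul_inv_cancel₀ hcn'
    calc A * ((B * (c (η y + 1))⁻¹) * R) * c (η y + 1)
        = ((c (η y + 1))⁻¹ * c (η y + 1)) * (A * (B * R)) := by ring
      _ = A * (B * R) := by rw [h1, one_mul]
      _ = (c n * (c n)⁻¹) * (A * (B * R)) := by rw [h2, one_mul]
      _ = c n * (A * (c n)⁻¹ * (B * R)) := by ring
  -- sums are preserved by the particle move
  have hsumkey : ∀ η : Fin L → ℕ, η x = n →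
      (∑ z, Function.update (Function.update η y (η y + 1)) x (n - 1) z)
        = ∑ z, η z := by
    intro η hηx
    set ξ := Function.update (Function.update η y (η y + 1)) x (n - 1) with hξ
    have hξx : ξ x = n - 1 := by simp [hξ]
    have hξy : ξ y = η y + 1 := by
      simp [hξ, Function.update_of_ne (Ne.symm hxy)]
    have hrest : ∑ z ∈ (Finset.univ.erase x).erase y, ξ z
        = ∑ z ∈ (Finset.univ.erase x).erase y, η z := by
      apply Finset.sum_congr rfl
      intro z hz
      rw [Finset.mem_erase, Finset.mem_erase] at hz
      simp [hξ, Function.update_of_ne hz.2.1, Function.update_of_ne hz.1]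
    rw [sum_split_two x y hxy ξ, sum_split_two x y hxy η, hξx, hξy, hηx, hrest]
    omega
  have key : (∑' η : Fin L → ℕ, if (∑ z, η z) = N ∧ η x = n - 1 then W η * c (η y) else 0)
      = c n * (∑' η : Fin L → ℕ, if (∑ z, η z) = N ∧ η x = n then W η else 0) := by
    rw [← tsum_mul_left]
    simp only [mul_ite, mul_zero]
    apply tsum_eq_tsum_of_ne_zero_bij
      (fun η => Function.update (Function.update (η : Fin L → ℕ) y ((η : Fin L → ℕ) y + 1)) x (n - 1))
    · -- injectivity
      rintro ⟨η, hη⟩ ⟨η', hη'⟩ h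
      simp only [Function.mem_support, ne_eq, ite_eq_right_iff, not_forall] at hη hη'
      obtain ⟨⟨_, hηx⟩, _⟩ := hη
      obtain ⟨⟨_, hη'x⟩, _⟩ := hη'
      simp only at h
      ext z
      show η z = η' z
      by_cases hzx : z = x
      · rw [hzx, hηx, hη'x]
      by_cases hzy : z = y
      · have := congrFun h y
        simp only [Function.update_of_ne (Ne.symm hxy), Function.update_self] at this
        rw [hzy]
        omega
      · have := congrFun h z
        simpa [Function.update_of_ne hzx, Function.update_of_ne hzy] using this
    · -- support inclusion
      rintro ξ hξ
      simp only [Function.mem_support, ne_eq, ite_eq_right_iff, not_forall] at hξ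
      obtain ⟨⟨hsum, hξx⟩, hne⟩ := hξ
      have hξy : 1 ≤ ξ y := by
        by_contra hcon
        have h0 : ξ y = 0 := by omega
        exact hne (by rw [h0, hc0, mul_zero])
      set η : Fin L → ℕ := Function.update (Function.update ξ y (ξ y - 1)) x n with hη
      have hηx : η x = n := by simp [hη]
      have hηy : η y = ξ y - 1 := by
        simp [hη, Function.update_of_ne (Ne.symm hxy)]
      have hηz : ∀ z, z ≠ x → z ≠ y → η z = ξ z := by
        intro z hzx hzy
        simp [hη, Function.update_of_ne hzx, Function.update_of_ne hzy]
      have hback : Function.update (Function.update η y (η y + 1)) x (n - 1) = ξ := by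
        ext z
        by_cases hzx : z = x
        · subst hzx
          simp [hξx]
        by_cases hzy : z = y
        · subst hzy
          rw [Function.update_of_ne (Ne.symm hxy), Function.update_self, hηy]
          omega
        · rw [Function.update_of_ne hzx, Function.update_of_ne hzy, hηz z hzx hzy]
      have hsumη : (∑ z, η z) = N := by
        rw [← hsum, sum_split_two x y hxy η, sum_split_two x y hxy ξ, hηx, hηy, hξx]
        have hrest : ∑ z ∈ (Finset.univ.erase x).erase y, η z
            = ∑ z ∈ (Finset.univ.erase x).erase y, ξ z := by
          apply Finset.sum_congr rfl
          intro z hz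
          rw [Finset.mem_erase, Finset.mem_erase] at hz
          rw [hηz z hz.2.1 hz.1]
        omega
      refine ⟨⟨η, ?_⟩, ?_⟩
      · simp only [Function.mem_support, ne_eq, ite_eq_right_iff, not_forall]
        exact ⟨⟨hsumη, hηx⟩, ne_of_gt (mul_pos hcn (hWpos η))⟩
      · exact hback
    · -- values agree
      rintro ⟨η, hη⟩
      simp only [Function.mem_support, ne_eq, ite_eq_right_iff, not_forall] at hη
      obtain ⟨⟨hsum, hηx⟩, _⟩ := hη
      simp only
      set ξ := Function.update (Function.update η y (η y + 1)) x (n - 1) with hξ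
      have hξx : ξ x = n - 1 := by simp [hξ]
      have hξy : ξ y = η y + 1 := by
        simp [hξ, Function.update_of_ne (Ne.symm hxy)]
      have hsumξ : (∑ z, ξ z) = N := by rw [hsumkey η hηx, hsum]
      rw [if_pos ⟨hsumξ, hξx⟩, if_pos ⟨hsum, hηx⟩, hξy, hWkey η hηx]
  rw [key]
end

section
/- Suppose γ : ℕ≥2 → ℝ₊ satisfies, for some ε ∈ (0, 1/2), constants ℓ_ε ∈ ℕ and C_ε < ∞, the recursion (1 - ε/L)·γ(L) ≤ ((L-2)/(L-1))·γ(L-1) + C_ε/L for all L ≥ ℓ_ε, and γ(L) < ∞ for every L. Then sup_L γ(L) < ∞. -/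
/-!
Once `K ≥ 0` absorbs the constants, `ε K + C ≤ K`, the level `γ ≤ K` is preserved by the
recursion: the loss `K/(L-1)` from the factor `(L-2)/(L-1)` beats the gain `(εK + C)/L`.
So `γ` stays below `K` from `max ℓ 1` on, and below the finitely many earlier values before.
-/

lemma recursion_rhs_le {L ε C K : ℝ} (hL : 1 < L) (hK : 0 ≤ K) (hKC : ε * K + C ≤ K) :
    (L - 2) / (L - 1) * K + C / L ≤ (1 - ε / L) * K := by
  have hL0 : 0 < L := by linarith
  have hL1 : 0 < L - 1 := by linarith
  have hcoef : (L - 2) / (L - 1) = 1 - 1 / (L - 1) := by field_simp; ring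
  calc (L - 2) / (L - 1) * K + C / L
      = K - K / (L - 1) + (ε * K + C) / L - ε * K / L := by rw [hcoef]; ring
    _ ≤ K - K / (L - 1) + K / L - ε * K / L := by gcongr
    _ ≤ K - K / (L - 1) + K / (L - 1) - ε * K / L := by gcongr; linarith
    _ = (1 - ε / L) * K := by ring

lemma le_of_recursion_le {L ε C K g g' : ℝ} (hL : 2 ≤ L) (hεL : ε < L) (hK : 0 ≤ K)
    (hKC : ε * K + C ≤ K) (hrec : (1 - ε / L) * g ≤ (L - 2) / (L - 1) * g' + C / L)
    (hg' : g' ≤ K) : g ≤ K := by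
  have hfactor : 0 < 1 - ε / L := by rw [sub_pos, div_lt_one (by linarith)]; exact hεL
  have hcoef : 0 ≤ (L - 2) / (L - 1) := div_nonneg (by linarith) (by linarith)
  refine le_of_mul_le_mul_left ?_ hfactor
  calc (1 - ε / L) * g ≤ (L - 2) / (L - 1) * g' + C / L := hrec
    _ ≤ (L - 2) / (L - 1) * K + C / L := by gcongr
    _ ≤ (1 - ε / L) * K := recursion_rhs_le (by linarith) hK hKC

lemma recursion_tail_le {γ : ℕ → ℝ} {ε C K : ℝ} {ℓ m : ℕ} (hε : ε < 2) (hK : 0 ≤ K)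
    (hKC : ε * K + C ≤ K)
    (hrec : ∀ L : ℕ, ℓ ≤ L → 2 ≤ L →
      (1 - ε / L) * γ L ≤ (((L : ℝ) - 2) / ((L : ℝ) - 1)) * γ (L - 1) + C / L)
    (hℓm : ℓ ≤ m) (hm : 1 ≤ m) (hγm : γ m ≤ K) : ∀ n, m ≤ n → γ n ≤ K := by
  intro n hn
  induction n, hn using Nat.le_induction with
  | base => exact hγm
  | succ n hmn ih =>
    have hn2 : (2 : ℝ) ≤ (n + 1 : ℕ) := by exact_mod_cast (by omega : 2 ≤ n + 1)
    exact le_of_recursion_le hn2 (by linarith) hK hKC (hrec (n + 1) (by omega) (by omega)) ih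

theorem recursion_uniform_bound_general
    (γ : ℕ → ℝ)
    (ε : ℝ) (hε' : ε < 1 / 2) (ℓ : ℕ) (C : ℝ)
    (hrec : ∀ L : ℕ, ℓ ≤ L → 2 ≤ L →
      (1 - ε / L) * γ L ≤ (((L : ℝ) - 2) / ((L : ℝ) - 1)) * γ (L - 1) + C / L) :
    ∃ B : ℝ, ∀ L : ℕ, 2 ≤ L → γ L ≤ B := by
  set m := max ℓ 1
  obtain ⟨M, hM⟩ := ((Set.finite_Iic m).image γ).bddAbove
  have hinit : ∀ L ≤ m, γ L ≤ M := fun L hL => hM ⟨L, hL, rfl⟩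
  set K := max M (2 * |C|)
  have hK : 0 ≤ K := le_trans (by positivity) (le_max_right _ _)
  have hKC : ε * K + C ≤ K := by
    have hεK : ε * K ≤ K / 2 := by nlinarith
    linarith [le_abs_self C, le_max_right M (2 * |C|)]
  have htail := recursion_tail_le (by linarith) hK hKC hrec (le_max_left ℓ 1) (le_max_right ℓ 1)
    ((hinit m le_rfl).trans (le_max_left _ _))
  refine ⟨K, fun L _ => ?_⟩
  rcases le_total L m with hLm | hmL
  · exact (hinit L hLm).trans (le_max_left _ _)
  · exact htail L hmL

/-- abstract recursion lemma: if `γ : ℕ → ℝ` is nonnegative on `L ≥ 2`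
and satisfies `(1 - ε/L)·γ(L) ≤ ((L-2)/(L-1))·γ(L-1) + C_ε/L` for all `L ≥ ℓ_ε`,
with `ε ∈ (0, 1/2)`, then `γ` is uniformly bounded over `L ≥ 2`. -/
theorem recursion_uniform_bound
    (γ : ℕ → ℝ) (hγ : ∀ L : ℕ, 2 ≤ L → 0 ≤ γ L)
    (ε : ℝ) (hε : 0 < ε) (hε' : ε < 1 / 2) (ℓ : ℕ) (C : ℝ)
    (hrec : ∀ L : ℕ, ℓ ≤ L → 2 ≤ L →
      (1 - ε / L) * γ L ≤ (((L : ℝ) - 2) / ((L : ℝ) - 1)) * γ (L - 1) + C / L) :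
    ∃ B : ℝ, ∀ L : ℕ, 2 ≤ L → γ L ≤ B :=
  recursion_uniform_bound_general γ ε hε' ℓ C hrec
end
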